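/- arXiv:2107.11611 — 2 statements merged into one kernel-verified Lean document; each statement's English description precedes it below -/
import Mathlib

section
/- Assume 0 < τ < τ* and that Q is irreducible. Then the matrix W_min is irreducible, and the matrix G = τ^{-1}(W_min − I) has strictly positive off-diagonal entries. -/
open MeasureTheory Matrix Filter

noncomputable section

/-- Entrywise Bochner integral over `(0,∞)` of a matrix-valued function. -/
def intP {n : ℕ} (f : ℝ → Matrix (Fin n) (Fin n) ℝ) : Matrix (Fin n) (Fin n) ℝ :=
  Matrix.of fun i j => ∫ x in Set.Ioi (0:ℝ), f x i j

/-- Matrix exponential. -/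
def mexp {n : ℕ} (A : Matrix (Fin n) (Fin n) ℝ) : Matrix (Fin n) (Fin n) ℝ :=
  NormedSpace.exp A

/-- `∫_0^x e^{Gs} ds` (entrywise). -/
def cumExp {n : ℕ} (G : Matrix (Fin n) (Fin n) ℝ) (x : ℝ) : Matrix (Fin n) (Fin n) ℝ :=
  Matrix.of fun i j => ∫ s in (0:ℝ)..x, mexp (s • G) i j

/-- Irreducibility of a square matrix: for all `i ≠ j` there is a path from `i` to `j`
along nonzero entries. -/
def MatIrr {m : Type*} (A : Matrix m m ℝ) : Prop :=
  ∀ i j : m, i ≠ j → ∃ (r : ℕ) (p : ℕ → m), p 0 = i ∧ p r = j ∧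
    ∀ k < r, A (p k) (p (k+1)) ≠ 0

/-- Spectral radius of a real matrix: supremum of the moduli of its complex eigenvalues. -/
def specRad {m : Type*} [Fintype m] [DecidableEq m] (A : Matrix m m ℝ) : ℝ :=
  sSup ((fun z : ℂ => ‖z‖) '' (spectrum ℂ (A.map (algebraMap ℝ ℂ))))

/-- `A` is an M-matrix: `A = s•I − B` with `B ≥ 0` entrywise and `ρ(B) ≤ s`. -/
def IsMMatrix {m : Type*} [Fintype m] [DecidableEq m] (A : Matrix m m ℝ) : Prop :=
  ∃ (s : ℝ) (B : Matrix m m ℝ), (∀ i j, 0 ≤ B i j) ∧ specRad B ≤ s ∧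
    A = s • (1 : Matrix m m ℝ) - B

/-- `A = M − N` is a regular splitting: `M` invertible, `M⁻¹ ≥ 0`, `N ≥ 0`. -/
def RegSplit {n : ℕ} (A M N : Matrix (Fin n) (Fin n) ℝ) : Prop :=
  A = M - N ∧ IsUnit M.det ∧ (∀ i j, 0 ≤ M⁻¹ i j) ∧ (∀ i j, 0 ≤ N i j)

/-- The complex characteristic roots (eigenvalues with algebraic multiplicity)
of a real matrix. -/
def cRoots {n : ℕ} (Y : Matrix (Fin n) (Fin n) ℝ) : Multiset ℂ :=
  ((Y.map (algebraMap ℝ ℂ)).charpoly).roots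

/-- substochastic matrix -/
def Substoch {n : ℕ} (W : Matrix (Fin n) (Fin n) ℝ) : Prop :=
  (∀ i j, 0 ≤ W i j) ∧ ∀ i, ∑ j, W i j ≤ 1

/-- stochastic matrix -/
def StochMat {n : ℕ} (W : Matrix (Fin n) (Fin n) ℝ) : Prop :=
  (∀ i j, 0 ≤ W i j) ∧ ∀ i, ∑ j, W i j = 1

/-- subgenerator -/
def IsSubGen {n : ℕ} (Y : Matrix (Fin n) (Fin n) ℝ) : Prop :=
  (∀ i j, i ≠ j → 0 ≤ Y i j) ∧ ∀ i, ∑ j, Y i j ≤ 0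

/-- generator -/
def IsGen {n : ℕ} (Y : Matrix (Fin n) (Fin n) ℝ) : Prop :=
  (∀ i j, i ≠ j → 0 ≤ Y i j) ∧ ∀ i, ∑ j, Y i j = 0

/-- The data of a Markov-modulated Lévy process: phase generator `Q`, Brownian
drifts `a` and volatilities `s` (denoted `σ` in the paper), Lévy densities `ν`,
phase-change jump densities `μ`, and `U0 = U(0)` (the atoms at 0 of the jump
distributions). -/
structure Dat (n : ℕ) where
  Q : Matrix (Fin n) (Fin n) ℝ
  a : Fin n → ℝ
  s : Fin n → ℝ
  ν : Fin n → ℝ → ℝ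
  μ : Fin n → Fin n → ℝ → ℝ
  U0 : Matrix (Fin n) (Fin n) ℝ

namespace Dat

variable {n : ℕ} (D : Dat n)

/-- The standing assumptions of the paper. -/
structure Good : Prop where
  hn : 1 ≤ n
  hQoff : ∀ i j, i ≠ j → 0 ≤ D.Q i j
  hQrow : ∀ i, ∑ j, D.Q i j = 0
  hQirr : MatIrr D.Q
  hs : ∀ i, 0 < D.s i
  hνc : ∀ i, ContinuousOn (D.ν i) (Set.Ioi 0)
  hν0 : ∀ i, ∀ x ∈ Set.Ioi (0:ℝ), 0 ≤ D.ν i x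
  hνi : ∀ i, IntegrableOn (D.ν i) (Set.Ioi 0)
  hU0d : ∀ i, D.U0 i i = 1
  hU0o : ∀ i j, i ≠ j → D.U0 i j ∈ Set.Icc (0:ℝ) 1
  hμc : ∀ i j, i ≠ j → ContinuousOn (D.μ i j) (Set.Ioi 0)
  hμ0 : ∀ i j, ∀ x ∈ Set.Ioi (0:ℝ), 0 ≤ D.μ i j x
  hμi : ∀ i j, i ≠ j → IntegrableOn (D.μ i j) (Set.Ioi 0)
  hμU : ∀ i j, i ≠ j → D.U0 i j + ∫ x in Set.Ioi (0:ℝ), D.μ i j x = 1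
  hμd : ∀ i x, D.μ i i x = 0

/-- `Δ_a`. -/
def Da : Matrix (Fin n) (Fin n) ℝ := Matrix.diagonal D.a

/-- `Δ_{σ²}`. -/
def Ds : Matrix (Fin n) (Fin n) ℝ := Matrix.diagonal fun i => (D.s i)^2

/-- `Δ_ν(x)`. -/
def Dν (x : ℝ) : Matrix (Fin n) (Fin n) ℝ := Matrix.diagonal fun i => D.ν i x

/-- `Q ∘ μ(x)` (Hadamard product). -/
def Qμ (x : ℝ) : Matrix (Fin n) (Fin n) ℝ := Matrix.of fun i j => D.Q i j * D.μ i j x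

/-- The matrix function `F`. -/
def F (Y : Matrix (Fin n) (Fin n) ℝ) : Matrix (Fin n) (Fin n) ℝ :=
  D.Da * Y + (1/2 : ℝ) • (D.Ds * (Y * Y))
    + intP (fun x => D.Dν x * (mexp (x • Y) - 1))
    + Matrix.hadamard D.Q D.U0
    + intP (fun x => D.Qμ x * mexp (x • Y))

/-- The drift `κ`, relative to the stationary vector `π` of `Q`. -/
def kappa (π : Fin n → ℝ) : ℝ :=
  ∑ i, π i * (D.a i + (∫ x in Set.Ioi (0:ℝ), x * D.ν i x)
    + ∑ j, D.Q i j * ∫ x in Set.Ioi (0:ℝ), x * D.μ i j x)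

/-- `π` is the (positive) stationary probability vector of `Q`. -/
def IsStat (π : Fin n → ℝ) : Prop :=
  (∀ i, 0 < π i) ∧ (∀ j, ∑ i, π i * D.Q i j = 0) ∧ ∑ i, π i = 1

/-- `H(τ, W)`. -/
def H (τ : ℝ) (W : Matrix (Fin n) (Fin n) ℝ) : Matrix (Fin n) (Fin n) ℝ :=
  intP (fun x => D.Dν x * (mexp ((τ⁻¹ * x) • (W - 1)) - 1))

/-- `K(τ, W)`. -/
def K (τ : ℝ) (W : Matrix (Fin n) (Fin n) ℝ) : Matrix (Fin n) (Fin n) ℝ :=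
  Matrix.hadamard D.Q D.U0 + intP (fun x => D.Qμ x * mexp ((τ⁻¹ * x) • (W - 1)))

/-- `B_1`. -/
def B1 : Matrix (Fin n) (Fin n) ℝ := D.Ds

/-- `B_0(τ)`. -/
def B0 (τ : ℝ) : Matrix (Fin n) (Fin n) ℝ := (2*τ) • D.Da - (2:ℝ) • D.Ds

/-- `B_{-1}(τ, W)`. -/
def Bm1 (τ : ℝ) (W : Matrix (Fin n) (Fin n) ℝ) : Matrix (Fin n) (Fin n) ℝ :=
  D.Ds - (2*τ) • D.Da + (2*τ^2) • (D.H τ W + D.K τ W)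

/-- Equation (QW): `B₁W² + B₀(τ)W + B₋₁(τ,W) = 0`. -/
def QW (τ : ℝ) (W : Matrix (Fin n) (Fin n) ℝ) : Prop :=
  D.B1 * (W * W) + D.B0 τ * W + D.Bm1 τ W = 0

/-- `B̃_{-1}(τ, W) = −B₀(τ)⁻¹ B₋₁(τ,W)`. -/
def Btm1 (τ : ℝ) (W : Matrix (Fin n) (Fin n) ℝ) : Matrix (Fin n) (Fin n) ℝ :=
  -(D.B0 τ)⁻¹ * D.Bm1 τ W

/-- `B̃_1(τ) = −B₀(τ)⁻¹ B₁`. -/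
def Bt1 (τ : ℝ) : Matrix (Fin n) (Fin n) ℝ := -(D.B0 τ)⁻¹ * D.B1

/-- `0 < τ < τ*`: `troot i` is the unique positive root `τ_i` of the quadratic
`σ_i² − 2τ a_i + 2τ²(q_ii − ∫_0^∞ ν_i)`, `τ` is positive, `τ < σ_i²/a_i` whenever
`a_i > 0`, and `τ < τ_i` for all `i`. -/
def TauOK (troot : Fin n → ℝ) (τ : ℝ) : Prop :=
  (∀ i, 0 < troot i ∧
      (D.s i)^2 - 2 * troot i * D.a i
        + 2 * (troot i)^2 * (D.Q i i - ∫ x in Set.Ioi (0:ℝ), D.ν i x) = 0 ∧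
      ∀ t > 0, (D.s i)^2 - 2 * t * D.a i
        + 2 * t^2 * (D.Q i i - ∫ x in Set.Ioi (0:ℝ), D.ν i x) = 0 → t = troot i) ∧
  0 < τ ∧ (∀ i, 0 < D.a i → τ < (D.s i)^2 / D.a i) ∧ (∀ i, τ < troot i)

/-- `ρ_i = ∫_0^∞ ν_i`. -/
def rho (i : Fin n) : ℝ := ∫ x in Set.Ioi (0:ℝ), D.ν i x

/-- `λ_i = ρ_i + |q_ii|`. -/
def lam (i : Fin n) : ℝ := D.rho i + |D.Q i i|

/-- `b_i`. -/
def b (i : Fin n) : ℝ := (Real.sqrt ((D.a i)^2 + 2 * D.lam i * (D.s i)^2) + D.a i) / (D.s i)^2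

/-- `c_i`. -/
def c (i : Fin n) : ℝ := D.b i - 2 * D.a i / (D.s i)^2

/-- `Ĉ(X)`. -/
def Chat (X : Matrix (Fin n) (Fin n) ℝ) : Matrix (Fin n) (Fin n) ℝ :=
  Matrix.hadamard (D.Q - Matrix.diagonal fun i => D.Q i i) D.U0
    + intP (fun x => D.Dν x * mexp (x • (X - Matrix.diagonal D.b)))
    + intP (fun x => D.Qμ x * mexp (x • (X - Matrix.diagonal D.b)))

/-- `NARE(W)`: the Riccati equation `S² − Δ_c S − S Δ_b + 2Δ_{σ²}⁻¹ Ĉ(W) = 0` in `S`. -/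
def NARE (W S : Matrix (Fin n) (Fin n) ℝ) : Prop :=
  S * S - Matrix.diagonal D.c * S - S * Matrix.diagonal D.b
    + (2:ℝ) • (Matrix.diagonal (fun i => ((D.s i)^2)⁻¹) * D.Chat W) = 0

/-- `S` is the minimal nonnegative solution of `NARE(W)`. -/
def MinSolNARE (W S : Matrix (Fin n) (Fin n) ℝ) : Prop :=
  (∀ i j, 0 ≤ S i j) ∧ D.NARE W S ∧
    ∀ T, (∀ i j, 0 ≤ T i j) → D.NARE W T → ∀ i j, S i j ≤ T i j

/-- `Λ` (relative to `G`). -/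
def Lam (G : Matrix (Fin n) (Fin n) ℝ) : Matrix (Fin n) (Fin n) ℝ :=
  intP (fun x => D.Dν x * cumExp G x) + intP (fun x => D.Qμ x * cumExp G x)

/-- `Θ = −2Δ_a − Δ_{σ²}G − 2Λ` (relative to `G`). -/
def Theta (G : Matrix (Fin n) (Fin n) ℝ) : Matrix (Fin n) (Fin n) ℝ :=
  (-2 : ℝ) • D.Da - D.Ds * G - (2:ℝ) • D.Lam G

/-- Integrability of the first moments `∫ x ν_i(x) dx`, `∫ x μ_ij(x) dx`. -/
def Moments : Prop :=
  (∀ i, IntegrableOn (fun x => x * D.ν i x) (Set.Ioi (0:ℝ))) ∧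
  (∀ i j, IntegrableOn (fun x => x * D.μ i j x) (Set.Ioi (0:ℝ)))

end Dat

/-!
For `0 < τ < τ*` the matrix `B₀(τ)` is diagonal with negative entries `-(2σᵢ² - 2τaᵢ)`, so
one step `V ↦ B̃₋₁(τ,V) + B̃₁(τ)V²` of the iteration is, row by row, a positive multiple of
`B₋₁(τ,V) + Δ_{σ²}V²`. For substochastic `V` the matrices `e^{τ⁻¹(V-I)x}` are substochastic
with diagonal at least `e^{-x/τ}`. This bounds `H` and `K`, and shows that the step preserves
substochasticity and that, uniformly in `V`, the new matrix has diagonal entries at least a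
positive multiple of the `τᵢ`-quadratic at `τ` (positive because `τ < τᵢ`), entries bounded
below on the edges of `Q`, and dominates a positive multiple of `V²`. Following a path of `Q`
from `i` to `j`, every entry of `W_k` is thus eventually bounded away from zero, and so is every
entry of the limit `W_min`.
-/

open Finset

namespace Substoch

variable {n : ℕ} {V W : Matrix (Fin n) (Fin n) ℝ}

lemma zero : Substoch (0 : Matrix (Fin n) (Fin n) ℝ) :=
  ⟨fun _ _ => le_rfl, fun _ => by simp⟩

lemma one : Substoch (1 : Matrix (Fin n) (Fin n) ℝ) :=
  ⟨Matrix.zero_le_one_elem, fun i => by simp [Matrix.one_apply]⟩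

lemma apply_le_one (hW : Substoch W) (i j : Fin n) : W i j ≤ 1 :=
  (single_le_sum (fun k _ => hW.1 i k) (mem_univ j)).trans (hW.2 i)

lemma sum_mul_apply_le {A : Matrix (Fin n) (Fin n) ℝ} (hA : ∀ i j, 0 ≤ A i j)
    (hW : Substoch W) (i : Fin n) : ∑ j, (A * W) i j ≤ ∑ k, A i k := calc
  ∑ j, (A * W) i j = ∑ k, A i k * ∑ j, W k j := by
    simp only [Matrix.mul_apply, mul_sum]; exact sum_comm
  _ ≤ ∑ k, A i k * 1 := sum_le_sum fun k _ => mul_le_mul_of_nonneg_left (hW.2 k) (hA i k)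
  _ = ∑ k, A i k := by simp

lemma mul (hV : Substoch V) (hW : Substoch W) : Substoch (V * W) :=
  ⟨fun i j => Matrix.mul_apply (M := V) ▸
      sum_nonneg fun k _ => mul_nonneg (hV.1 i k) (hW.1 k j),
    fun i => (sum_mul_apply_le hV.1 hW i).trans (hV.2 i)⟩

lemma pow (hW : Substoch W) (m : ℕ) : Substoch (W ^ m) := by
  induction m with
  | zero => exact pow_zero W ▸ one
  | succ m ih => exact pow_succ W m ▸ ih.mul hW

lemma mul_apply_le_mul_apply (hW : Substoch W) (i l j : Fin n) :
    W i l * W l j ≤ (W * W) i j :=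
  single_le_sum (fun k _ => mul_nonneg (hW.1 i k) (hW.1 k j)) (mem_univ l)

end Substoch

section MatrixExp

variable {n : ℕ}

section LinftyOpNorm

attribute [local instance] Matrix.linftyOpNormedRing Matrix.linftyOpNormedAlgebra

lemma hasSum_mexp (A : Matrix (Fin n) (Fin n) ℝ) :
    HasSum (fun m : ℕ => (m.factorial : ℝ)⁻¹ • A ^ m) (mexp A) :=
  NormedSpace.exp_series_hasSum_exp' A

lemma continuous_mexp : Continuous (mexp : Matrix (Fin n) (Fin n) ℝ → _) :=
  NormedSpace.exp_continuous

end LinftyOpNorm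

lemma mexp_smul_sub_one (W : Matrix (Fin n) (Fin n) ℝ) (c : ℝ) :
    mexp (c • (W - 1)) = Real.exp (-c) • mexp (c • W) := by
  have hsplit : c • (W - 1) = c • W + Matrix.scalar (Fin n) (-c) := by
    rw [Matrix.scalar_apply, ← Matrix.smul_one_eq_diagonal, smul_sub, neg_smul, sub_eq_add_neg]
  rw [mexp, hsplit,
    Matrix.exp_add_of_commute _ _ (Matrix.scalar_commute _ (Commute.all _) _).symm,
    Matrix.scalar_apply, Matrix.exp_diagonal, Pi.exp_def, ← Real.exp_eq_exp_ℝ,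
    ← Matrix.smul_one_eq_diagonal, mul_smul_comm, mul_one, mexp]

lemma hasSum_mexp_smul_apply (W : Matrix (Fin n) (Fin n) ℝ) (c : ℝ) (i j : Fin n) :
    HasSum (fun m : ℕ => c ^ m / m.factorial * (W ^ m) i j) (mexp (c • W) i j) := by
  convert Pi.hasSum.mp (Pi.hasSum.mp (hasSum_mexp (c • W)) i) j using 1
  ext m
  simp [smul_pow, div_eq_inv_mul, mul_assoc]

variable {W : Matrix (Fin n) (Fin n) ℝ} {c : ℝ}

lemma Substoch.mexp_smul_apply_nonneg (hW : Substoch W) (hc : 0 ≤ c) (i j : Fin n) :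
    0 ≤ mexp (c • W) i j :=
  (hasSum_mexp_smul_apply W c i j).nonneg fun m => by
    have := (hW.pow m).1 i j
    positivity

lemma Substoch.one_le_mexp_smul_apply_self (hW : Substoch W) (hc : 0 ≤ c) (i : Fin n) :
    1 ≤ mexp (c • W) i i := by
  simpa using le_hasSum (hasSum_mexp_smul_apply W c i i) 0 fun m _ => by
    have := (hW.pow m).1 i i
    positivity

lemma Substoch.sum_mexp_smul_apply_le (hW : Substoch W) (hc : 0 ≤ c) (i : Fin n) :
    ∑ j, mexp (c • W) i j ≤ Real.exp c := by
  have hexp : HasSum (fun m : ℕ => c ^ m / m.factorial) (Real.exp c) := by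
    rw [Real.exp_eq_exp_ℝ]; exact NormedSpace.expSeries_div_hasSum_exp c
  refine hasSum_le (fun m => ?_) (hasSum_sum fun j _ => hasSum_mexp_smul_apply W c i j) hexp
  rw [← mul_sum]
  exact mul_le_of_le_one_right (by positivity) ((hW.pow m).2 i)

lemma Substoch.mexp_smul_sub_one (hW : Substoch W) (hc : 0 ≤ c) :
    Substoch (mexp (c • (W - 1))) := by
  rw [_root_.mexp_smul_sub_one]
  refine ⟨fun i j => ?_, fun i => ?_⟩
  · exact mul_nonneg (Real.exp_nonneg _) (hW.mexp_smul_apply_nonneg hc i j)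
  · simp only [Matrix.smul_apply, smul_eq_mul, ← mul_sum]
    calc Real.exp (-c) * ∑ j, mexp (c • W) i j ≤ Real.exp (-c) * Real.exp c :=
          mul_le_mul_of_nonneg_left (hW.sum_mexp_smul_apply_le hc i) (Real.exp_nonneg _)
      _ = 1 := by rw [← Real.exp_add, neg_add_cancel, Real.exp_zero]

lemma Substoch.exp_neg_le_mexp_smul_sub_one_apply_self (hW : Substoch W) (hc : 0 ≤ c)
    (i : Fin n) : Real.exp (-c) ≤ mexp (c • (W - 1)) i i := by
  rw [_root_.mexp_smul_sub_one, Matrix.smul_apply, smul_eq_mul]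
  exact le_mul_of_one_le_right (Real.exp_nonneg _) (hW.one_le_mexp_smul_apply_self hc i)

lemma continuous_mexp_mul_smul_sub_one (τ : ℝ) (W : Matrix (Fin n) (Fin n) ℝ) :
    Continuous fun x : ℝ => mexp ((τ⁻¹ * x) • (W - 1)) :=
  continuous_mexp.comp (by fun_prop)

lemma Substoch.mexp_mul_smul_sub_one {τ : ℝ} (hW : Substoch W) (hτ : 0 < τ) :
    ∀ x ∈ Set.Ioi (0:ℝ), Substoch (mexp ((τ⁻¹ * x) • (W - 1))) := fun _ hx =>
  hW.mexp_smul_sub_one (mul_nonneg (inv_nonneg.2 hτ.le) (le_of_lt hx))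

end MatrixExp

section KernelIntegrals

open Set

lemma setIntegral_mul_pos {s : Set ℝ} (hs : MeasurableSet s) {f g : ℝ → ℝ}
    (hf : ∀ x ∈ s, 0 ≤ f x) (hg : ∀ x ∈ s, 0 < g x) (hfi : IntegrableOn f s)
    (hfgi : IntegrableOn (fun x => f x * g x) s) (hpos : 0 < ∫ x in s, f x) :
    0 < ∫ x in s, f x * g x := by
  have hf' : 0 ≤ᵐ[volume.restrict s] f := (ae_restrict_iff' hs).2 (ae_of_all _ hf)
  have hfg' : 0 ≤ᵐ[volume.restrict s] fun x => f x * g x :=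
    (ae_restrict_iff' hs).2 (ae_of_all _ fun x hx => mul_nonneg (hf x hx) (hg x hx).le)
  rw [setIntegral_pos_iff_support_of_nonneg_ae hf' hfi] at hpos
  rw [setIntegral_pos_iff_support_of_nonneg_ae hfg' hfgi]
  convert hpos using 2
  ext x
  simp only [mem_inter_iff, Function.mem_support, and_congr_left_iff]
  exact fun hx => mul_ne_zero_iff_right (hg x hx).ne'

variable {n : ℕ}

@[simp]
lemma intP_apply (f : ℝ → Matrix (Fin n) (Fin n) ℝ) (i j : Fin n) :
    intP f i j = ∫ x in Ioi (0:ℝ), f x i j :=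
  rfl

lemma integrableOn_mul_exp_neg_mul {f : ℝ → ℝ} (hf : IntegrableOn f (Ioi 0)) {τ : ℝ}
    (hτ : 0 < τ) : IntegrableOn (fun x => f x * Real.exp (-(τ⁻¹ * x))) (Ioi 0) := by
  refine hf.mul_bdd (by fun_prop) (c := 1) ?_
  filter_upwards [ae_restrict_mem measurableSet_Ioi] with x hx
  rw [Real.norm_eq_abs, abs_of_pos (Real.exp_pos _), Real.exp_le_one_iff, neg_nonpos]
  exact mul_nonneg (inv_nonneg.2 hτ.le) (le_of_lt hx)

variable {A E : ℝ → Matrix (Fin n) (Fin n) ℝ}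

lemma integrableOn_apply_mul_apply (hA : ∀ i j, IntegrableOn (fun x => A x i j) (Ioi 0))
    (hEc : Continuous E) (hE : ∀ x ∈ Ioi (0:ℝ), Substoch (E x)) (i k j : Fin n) :
    IntegrableOn (fun x => A x i k * E x k j) (Ioi 0) := by
  refine (hA i k).mul_bdd (hEc.matrix_elem k j).aestronglyMeasurable (c := 1) ?_
  filter_upwards [ae_restrict_mem measurableSet_Ioi] with x hx
  rw [Real.norm_eq_abs, abs_of_nonneg ((hE x hx).1 k j)]
  exact (hE x hx).apply_le_one k j

lemma integrableOn_mul_apply (hA : ∀ i j, IntegrableOn (fun x => A x i j) (Ioi 0))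
    (hEc : Continuous E) (hE : ∀ x ∈ Ioi (0:ℝ), Substoch (E x)) (i j : Fin n) :
    IntegrableOn (fun x => (A x * E x) i j) (Ioi 0) := by
  simp only [Matrix.mul_apply]
  exact integrable_finsetSum _ fun k _ => integrableOn_apply_mul_apply hA hEc hE i k j

lemma intP_mul_apply_nonneg (hA : ∀ x ∈ Ioi (0:ℝ), ∀ i j, 0 ≤ A x i j)
    (hE : ∀ x ∈ Ioi (0:ℝ), Substoch (E x)) (i j : Fin n) :
    0 ≤ intP (fun x => A x * E x) i j :=
  setIntegral_nonneg measurableSet_Ioi fun x hx => by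
    simp only [Matrix.mul_apply]
    exact sum_nonneg fun k _ => mul_nonneg (hA x hx i k) ((hE x hx).1 k j)

lemma integral_apply_mul_apply_self_le (hA0 : ∀ x ∈ Ioi (0:ℝ), ∀ i j, 0 ≤ A x i j)
    (hA : ∀ i j, IntegrableOn (fun x => A x i j) (Ioi 0)) (hEc : Continuous E)
    (hE : ∀ x ∈ Ioi (0:ℝ), Substoch (E x)) (i j : Fin n) :
    ∫ x in Ioi (0:ℝ), A x i j * E x j j ≤ intP (fun x => A x * E x) i j :=
  setIntegral_mono_on (integrableOn_apply_mul_apply hA hEc hE i j j)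
    (integrableOn_mul_apply hA hEc hE i j) measurableSet_Ioi fun x hx =>
      single_le_sum (f := fun k => A x i k * E x k j)
        (fun k _ => mul_nonneg (hA0 x hx i k) ((hE x hx).1 k j)) (mem_univ j)

lemma sum_intP_mul_apply_le (hA0 : ∀ x ∈ Ioi (0:ℝ), ∀ i j, 0 ≤ A x i j)
    (hA : ∀ i j, IntegrableOn (fun x => A x i j) (Ioi 0)) (hEc : Continuous E)
    (hE : ∀ x ∈ Ioi (0:ℝ), Substoch (E x)) (i : Fin n) :
    ∑ j, intP (fun x => A x * E x) i j ≤ ∑ j, intP A i j := by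
  simp only [intP_apply]
  rw [← integral_finsetSum _ fun j _ => integrableOn_mul_apply hA hEc hE i j,
    ← integral_finsetSum _ fun j _ => hA i j]
  exact setIntegral_mono_on
    (integrable_finsetSum _ fun j _ => integrableOn_mul_apply hA hEc hE i j)
    (integrable_finsetSum _ fun j _ => hA i j) measurableSet_Ioi fun x hx =>
      (hE x hx).sum_mul_apply_le (hA0 x hx) i

end KernelIntegrals

namespace Dat

open Set

variable {n : ℕ} {D : Dat n} {troot : Fin n → ℝ} {τ : ℝ} {V : Matrix (Fin n) (Fin n) ℝ}

lemma Good.integral_μ (hD : D.Good) (i j : Fin n) :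
    ∫ x in Ioi (0:ℝ), D.μ i j x = 1 - D.U0 i j := by
  rcases eq_or_ne i j with rfl | hij
  · simp [hD.hμd, hD.hU0d]
  · linarith [hD.hμU i j hij]

lemma Good.integrableOn_μ (hD : D.Good) (i j : Fin n) : IntegrableOn (D.μ i j) (Ioi 0) := by
  rcases eq_or_ne i j with rfl | hij
  · simp [funext (hD.hμd i)]
  · exact hD.hμi i j hij

lemma Good.Dν_apply_nonneg (hD : D.Good) : ∀ x ∈ Ioi (0:ℝ), ∀ i j, 0 ≤ D.Dν x i j := by
  intro x hx i j
  rcases eq_or_ne i j with rfl | hij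
  · simpa [Dν] using hD.hν0 i x hx
  · simp [Dν, hij]

lemma Good.Qμ_apply_nonneg (hD : D.Good) : ∀ x ∈ Ioi (0:ℝ), ∀ i j, 0 ≤ D.Qμ x i j := by
  intro x hx i j
  rcases eq_or_ne i j with rfl | hij
  · simp [Qμ, hD.hμd]
  · exact mul_nonneg (hD.hQoff i j hij) (hD.hμ0 i j x hx)

lemma Good.integrableOn_Dν_apply (hD : D.Good) (i j : Fin n) :
    IntegrableOn (fun x => D.Dν x i j) (Ioi 0) := by
  rcases eq_or_ne i j with rfl | hij
  · simpa [Dν] using hD.hνi i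
  · simp [Dν, hij]

lemma Good.integrableOn_Qμ_apply (hD : D.Good) (i j : Fin n) :
    IntegrableOn (fun x => D.Qμ x i j) (Ioi 0) :=
  (hD.integrableOn_μ i j).const_mul (D.Q i j)

lemma intP_Dν : intP D.Dν = Matrix.diagonal D.rho := by
  ext i j
  rcases eq_or_ne i j with rfl | hij
  · simp [Dν, rho]
  · simp [Dν, hij]

lemma Good.sum_intP_Qμ_apply (hD : D.Good) (i : Fin n) :
    ∑ j, intP D.Qμ i j = -∑ j, D.Q i j * D.U0 i j := by
  simp only [intP_apply, Qμ, Matrix.of_apply, integral_const_mul, hD.integral_μ, mul_sub,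
    mul_one, sum_sub_distrib, hD.hQrow, zero_sub]

lemma Good.U0_add_integral_pos (hD : D.Good) (hτ : 0 < τ) {i j : Fin n} (hij : i ≠ j) :
    0 < D.U0 i j + ∫ x in Ioi (0:ℝ), D.μ i j x * Real.exp (-(τ⁻¹ * x)) := by
  rcases (hD.hU0o i j hij).1.lt_or_eq with hU | hU
  · exact add_pos_of_pos_of_nonneg hU (setIntegral_nonneg measurableSet_Ioi fun x hx =>
      mul_nonneg (hD.hμ0 i j x hx) (Real.exp_nonneg _))
  · rw [← hU, zero_add]
    refine setIntegral_mul_pos measurableSet_Ioi (hD.hμ0 i j) (fun x _ => Real.exp_pos _)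
      (hD.integrableOn_μ i j) (integrableOn_mul_exp_neg_mul (hD.integrableOn_μ i j) hτ) ?_
    rw [hD.integral_μ, ← hU, sub_zero]
    exact one_pos

lemma H_eq (hD : D.Good) (hτ : 0 < τ) (hV : Substoch V) :
    D.H τ V = intP (fun x => D.Dν x * mexp ((τ⁻¹ * x) • (V - 1))) - diagonal D.rho := by
  ext i j
  rw [← intP_Dν, Matrix.sub_apply, H]
  simp only [intP_apply]
  rw [← integral_sub (integrableOn_mul_apply hD.integrableOn_Dν_apply
      (continuous_mexp_mul_smul_sub_one τ V) (hV.mexp_mul_smul_sub_one hτ) i j)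
      (hD.integrableOn_Dν_apply i j)]
  simp [mul_sub]

lemma H_apply_nonneg_of_ne (hD : D.Good) (hτ : 0 < τ) (hV : Substoch V) {i j : Fin n}
    (hij : i ≠ j) : 0 ≤ D.H τ V i j := by
  rw [H_eq hD hτ hV, Matrix.sub_apply, Matrix.diagonal_apply_ne _ hij, sub_zero]
  exact intP_mul_apply_nonneg hD.Dν_apply_nonneg (hV.mexp_mul_smul_sub_one hτ) i j

lemma neg_rho_le_H_apply_self (hD : D.Good) (hτ : 0 < τ) (hV : Substoch V) (i : Fin n) :
    -D.rho i ≤ D.H τ V i i := by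
  rw [H_eq hD hτ hV, Matrix.sub_apply, Matrix.diagonal_apply_eq]
  linarith [intP_mul_apply_nonneg hD.Dν_apply_nonneg (hV.mexp_mul_smul_sub_one hτ) i i]

lemma sum_H_apply_nonpos (hD : D.Good) (hτ : 0 < τ) (hV : Substoch V) (i : Fin n) :
    ∑ j, D.H τ V i j ≤ 0 := by
  have h := sum_intP_mul_apply_le hD.Dν_apply_nonneg hD.integrableOn_Dν_apply
    (continuous_mexp_mul_smul_sub_one τ V) (hV.mexp_mul_smul_sub_one hτ) i
  rw [intP_Dν] at h
  simpa [H_eq hD hτ hV, sum_sub_distrib, Matrix.diagonal_apply] using h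

lemma le_K_apply (hD : D.Good) (hτ : 0 < τ) (hV : Substoch V) (i j : Fin n) :
    D.Q i j * (D.U0 i j + ∫ x in Ioi (0:ℝ), D.μ i j x * Real.exp (-(τ⁻¹ * x)))
      ≤ D.K τ V i j := by
  have hE := hV.mexp_mul_smul_sub_one hτ
  have hmono : ∫ x in Ioi (0:ℝ), D.Qμ x i j * Real.exp (-(τ⁻¹ * x))
      ≤ ∫ x in Ioi (0:ℝ), D.Qμ x i j * mexp ((τ⁻¹ * x) • (V - 1)) j j :=
    setIntegral_mono_on (integrableOn_mul_exp_neg_mul (hD.integrableOn_Qμ_apply i j) hτ)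
      (integrableOn_apply_mul_apply hD.integrableOn_Qμ_apply
      (continuous_mexp_mul_smul_sub_one τ V) hE i j j) measurableSet_Ioi fun x hx =>
      mul_le_mul_of_nonneg_left (hV.exp_neg_le_mexp_smul_sub_one_apply_self
        (mul_nonneg (inv_nonneg.2 hτ.le) (le_of_lt hx)) j) (hD.Qμ_apply_nonneg x hx i j)
  have hK := integral_apply_mul_apply_self_le hD.Qμ_apply_nonneg hD.integrableOn_Qμ_apply
    (continuous_mexp_mul_smul_sub_one τ V) hE i j
  have hQ : D.Q i j * ∫ x in Ioi (0:ℝ), D.μ i j x * Real.exp (-(τ⁻¹ * x))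
      = ∫ x in Ioi (0:ℝ), D.Qμ x i j * Real.exp (-(τ⁻¹ * x)) := by
    simp only [Qμ, Matrix.of_apply, mul_assoc, integral_const_mul]
  rw [K, Matrix.add_apply, Matrix.hadamard_apply, mul_add, hQ]
  linarith

lemma sum_K_apply_nonpos (hD : D.Good) (hτ : 0 < τ) (hV : Substoch V) (i : Fin n) :
    ∑ j, D.K τ V i j ≤ 0 := by
  have h := sum_intP_mul_apply_le hD.Qμ_apply_nonneg hD.integrableOn_Qμ_apply
    (continuous_mexp_mul_smul_sub_one τ V) (hV.mexp_mul_smul_sub_one hτ) i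
  rw [hD.sum_intP_Qμ_apply] at h
  simp only [K, Matrix.add_apply, Matrix.hadamard_apply, sum_add_distrib]
  linarith

lemma Bm1_apply (τ : ℝ) (V : Matrix (Fin n) (Fin n) ℝ) (i j : Fin n) :
    D.Bm1 τ V i j = (if i = j then (D.s i) ^ 2 - 2 * τ * D.a i else 0)
      + 2 * τ ^ 2 * (D.H τ V i j + D.K τ V i j) := by
  simp only [Bm1, Ds, Da, Matrix.add_apply, Matrix.sub_apply, Matrix.smul_apply,
    Matrix.diagonal_apply, smul_eq_mul]
  split_ifs <;> ring

/-- The quadratic of `TauOK` whose positive root is `τ_i`. -/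
def tauQuadratic (D : Dat n) (τ : ℝ) (i : Fin n) : ℝ :=
  (D.s i) ^ 2 - 2 * τ * D.a i + 2 * τ ^ 2 * (D.Q i i - D.rho i)

lemma tauQuadratic_le_Bm1_apply_self (hD : D.Good) (hτ : 0 < τ) (hV : Substoch V)
    (i : Fin n) : D.tauQuadratic τ i ≤ D.Bm1 τ V i i := by
  have hH := neg_rho_le_H_apply_self hD hτ hV i
  have hK := le_K_apply hD hτ hV i i
  simp only [hD.hU0d, hD.hμd, zero_mul, integral_zero, add_zero, mul_one] at hK
  rw [Bm1_apply, if_pos rfl, tauQuadratic]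
  nlinarith

lemma le_Bm1_apply_of_ne (hD : D.Good) (hτ : 0 < τ) (hV : Substoch V) {i j : Fin n}
    (hij : i ≠ j) :
    2 * τ ^ 2 * (D.Q i j * (D.U0 i j + ∫ x in Ioi (0:ℝ), D.μ i j x * Real.exp (-(τ⁻¹ * x))))
    ≤ D.Bm1 τ V i j := by
  have hH := H_apply_nonneg_of_ne hD hτ hV hij
  have hK := le_K_apply hD hτ hV i j
  rw [Bm1_apply, if_neg hij, zero_add]
  nlinarith

lemma sum_Bm1_apply_le (hD : D.Good) (hτ : 0 < τ) (hV : Substoch V) (i : Fin n) :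
    ∑ j, D.Bm1 τ V i j ≤ (D.s i) ^ 2 - 2 * τ * D.a i := by
  have hH := sum_H_apply_nonpos hD hτ hV i
  have hK := sum_K_apply_nonpos hD hτ hV i
  simp only [Bm1_apply, sum_add_distrib, sum_ite_eq, Finset.mem_univ, if_true, ← mul_sum]
  nlinarith

def negB0Diag (D : Dat n) (τ : ℝ) (i : Fin n) : ℝ := 2 * (D.s i) ^ 2 - 2 * τ * D.a i

lemma B0_eq (τ : ℝ) : D.B0 τ = -Matrix.diagonal (D.negB0Diag τ) := by
  ext i j
  simp only [B0, Da, Ds, negB0Diag, Matrix.sub_apply, Matrix.neg_apply, Matrix.smul_apply,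
    Matrix.diagonal_apply, smul_eq_mul]
  split_ifs <;> ring

lemma TauOK.pos (hτ : D.TauOK troot τ) : 0 < τ := hτ.2.1

lemma TauOK.negB0Diag_pos (hD : D.Good) (hτ : D.TauOK troot τ) (i : Fin n) :
    0 < D.negB0Diag τ i := by
  obtain ⟨-, hτ0, hτa, -⟩ := hτ
  have hs := pow_pos (hD.hs i) 2
  unfold negB0Diag
  rcases le_or_gt (D.a i) 0 with ha | ha
  · nlinarith
  · nlinarith [(lt_div_iff₀ ha).1 (hτa i ha)]

lemma TauOK.tauQuadratic_pos (hD : D.Good) (hτ : D.TauOK troot τ) (i : Fin n) :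
    0 < D.tauQuadratic τ i := by
  obtain ⟨hroot, hτ0, -, hlt⟩ := hτ
  have hcont : ContinuousOn (fun t => D.tauQuadratic t i) (Icc 0 τ) := by
    unfold tauQuadratic; fun_prop
  have h0 : 0 < D.tauQuadratic 0 i := by simp [tauQuadratic, pow_pos (hD.hs i) 2]
  by_contra! hneg
  obtain ⟨t, ⟨ht0, htτ⟩, ht⟩ := intermediate_value_Icc' hτ0.le hcont ⟨hneg, h0.le⟩
  have htpos : 0 < t := ht0.lt_of_ne (by rintro rfl; exact h0.ne' ht)
  linarith [(hroot i).2.2 t htpos ht, hlt i]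

lemma TauOK.neg_inv_B0 (hD : D.Good) (hτ : D.TauOK troot τ) :
    -(D.B0 τ)⁻¹ = Matrix.diagonal fun i => (D.negB0Diag τ i)⁻¹ := by
  rw [Matrix.inv_eq_left_inv (B := -Matrix.diagonal fun i => (D.negB0Diag τ i)⁻¹), neg_neg]
  rw [B0_eq, neg_mul_neg, Matrix.diagonal_mul_diagonal, ← Matrix.diagonal_one]
  congr 1
  ext i
  exact inv_mul_cancel₀ (hτ.negB0Diag_pos hD i).ne'

def step (D : Dat n) (τ : ℝ) (V : Matrix (Fin n) (Fin n) ℝ) : Matrix (Fin n) (Fin n) ℝ :=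
  D.Btm1 τ V + D.Bt1 τ * (V * V)

lemma TauOK.step_apply (hD : D.Good) (hτ : D.TauOK troot τ) (V : Matrix (Fin n) (Fin n) ℝ)
    (i j : Fin n) :
    D.step τ V i j = (D.negB0Diag τ i)⁻¹ * (D.Bm1 τ V i j + (D.s i) ^ 2 * (V * V) i j) := by
  rw [step, Btm1, Bt1, Matrix.mul_assoc, ← Matrix.mul_add, hτ.neg_inv_B0 hD,
    Matrix.diagonal_mul, Matrix.add_apply, B1, Ds, Matrix.diagonal_mul]

lemma TauOK.Bm1_apply_nonneg (hD : D.Good) (hτ : D.TauOK troot τ) (hV : Substoch V)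
    (i j : Fin n) : 0 ≤ D.Bm1 τ V i j := by
  rcases eq_or_ne i j with rfl | hij
  · exact (hτ.tauQuadratic_pos hD i).le.trans (tauQuadratic_le_Bm1_apply_self hD hτ.pos hV i)
  · refine le_trans ?_ (le_Bm1_apply_of_ne hD hτ.pos hV hij)
    have := hD.hQoff i j hij
    have := hD.U0_add_integral_pos hτ.pos hij
    positivity

lemma TauOK.step_substoch (hD : D.Good) (hτ : D.TauOK troot τ) (hV : Substoch V) :
    Substoch (D.step τ V) := by
  have hd := hτ.negB0Diag_pos hD
  refine ⟨fun i j => ?_, fun i => ?_⟩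
  · rw [hτ.step_apply hD]
    have := hτ.Bm1_apply_nonneg hD hV i j
    have := (hV.mul hV).1 i j
    have := hd i
    positivity
  · simp only [hτ.step_apply hD, ← mul_sum, sum_add_distrib]
    rw [inv_mul_le_one₀ (hd i)]
    have h1 := sum_Bm1_apply_le hD hτ.pos hV i
    have h2 := (hV.mul hV).2 i
    unfold negB0Diag
    nlinarith [sq_nonneg (D.s i)]

lemma TauOK.exists_pos_le_step_apply_self (hD : D.Good) (hτ : D.TauOK troot τ) (i : Fin n) :
    ∃ ε > 0, ∀ V, Substoch V → ε ≤ D.step τ V i i := by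
  have hd := hτ.negB0Diag_pos hD i
  refine ⟨(D.negB0Diag τ i)⁻¹ * D.tauQuadratic τ i,
    mul_pos (inv_pos.2 hd) (hτ.tauQuadratic_pos hD i), fun V hV => ?_⟩
  rw [hτ.step_apply hD]
  refine mul_le_mul_of_nonneg_left ?_ (inv_nonneg.2 hd.le)
  exact le_add_of_le_of_nonneg (tauQuadratic_le_Bm1_apply_self hD hτ.pos hV i)
    (mul_nonneg (sq_nonneg _) ((hV.mul hV).1 i i))

lemma TauOK.exists_pos_le_step_apply_of_Q_ne_zero (hD : D.Good) (hτ : D.TauOK troot τ)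
    {i j : Fin n} (hij : i ≠ j) (hQ : D.Q i j ≠ 0) :
    ∃ ε > 0, ∀ V, Substoch V → ε ≤ D.step τ V i j := by
  have hd := hτ.negB0Diag_pos hD i
  have hQpos := (hD.hQoff i j hij).lt_of_ne hQ.symm
  have hτ0 := hτ.pos
  have hU := hD.U0_add_integral_pos hτ0 hij
  refine ⟨(D.negB0Diag τ i)⁻¹ * (2 * τ ^ 2 * (D.Q i j * (D.U0 i j
    + ∫ x in Ioi (0:ℝ), D.μ i j x * Real.exp (-(τ⁻¹ * x))))), by positivity,
    fun V hV => ?_⟩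
  rw [hτ.step_apply hD]
  refine mul_le_mul_of_nonneg_left ?_ (inv_nonneg.2 hd.le)
  exact le_add_of_le_of_nonneg (le_Bm1_apply_of_ne hD hτ0 hV hij)
    (mul_nonneg (sq_nonneg _) ((hV.mul hV).1 i j))

lemma TauOK.exists_pos_mul_le_step_apply (hD : D.Good) (hτ : D.TauOK troot τ) (i j : Fin n) :
    ∃ c > 0, ∀ V, Substoch V → ∀ l, c * (V i l * V l j) ≤ D.step τ V i j := by
  have hd := hτ.negB0Diag_pos hD i
  refine ⟨(D.negB0Diag τ i)⁻¹ * (D.s i) ^ 2, mul_pos (inv_pos.2 hd) (pow_pos (hD.hs i) 2),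
    fun V hV l => ?_⟩
  rw [hτ.step_apply hD, mul_assoc]
  refine mul_le_mul_of_nonneg_left ?_ (inv_nonneg.2 hd.le)
  exact le_add_of_nonneg_of_le (hτ.Bm1_apply_nonneg hD hV i j)
    (mul_le_mul_of_nonneg_left (hV.mul_apply_le_mul_apply i l j) (sq_nonneg _))

end Dat

section EventuallyBddAwayFromZero

open Topology

variable {m : Type*} {W : ℕ → Matrix m m ℝ} {i j : m}

def EventuallyBddAwayFromZero (W : ℕ → Matrix m m ℝ) (i j : m) : Prop :=
  ∃ ε > 0, ∀ᶠ k in atTop, ε ≤ W k i j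

lemma eventually_atTop_of_succ {p : ℕ → Prop} (h : ∀ᶠ k in atTop, p (k + 1)) :
    ∀ᶠ k in atTop, p k := by
  rw [← map_add_atTop_eq_nat 1]
  exact h

lemma EventuallyBddAwayFromZero.of_succ {ε : ℝ} (hε : 0 < ε)
    (h : ∀ k, ε ≤ W (k + 1) i j) :
    EventuallyBddAwayFromZero W i j :=
  ⟨ε, hε, eventually_atTop_of_succ (Eventually.of_forall h)⟩

lemma EventuallyBddAwayFromZero.trans {l : m} {c : ℝ} (hc : 0 < c) (hW : ∀ k, 0 ≤ W k i l)
    (hmul : ∀ k, c * (W k i l * W k l j) ≤ W (k + 1) i j)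
    (hil : EventuallyBddAwayFromZero W i l) (hlj : EventuallyBddAwayFromZero W l j) :
    EventuallyBddAwayFromZero W i j := by
  obtain ⟨ε₁, hε₁, h₁⟩ := hil
  obtain ⟨ε₂, hε₂, h₂⟩ := hlj
  refine ⟨c * (ε₁ * ε₂), by positivity, eventually_atTop_of_succ ?_⟩
  filter_upwards [h₁, h₂] with k hk₁ hk₂
  exact (mul_le_mul_of_nonneg_left (mul_le_mul hk₁ hk₂ hε₂.le (hW k)) hc.le).trans (hmul k)

lemma EventuallyBddAwayFromZero.pos_of_tendsto {L : Matrix m m ℝ}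
    (h : EventuallyBddAwayFromZero W i j) (hW : Tendsto W atTop (𝓝 L)) : 0 < L i j := by
  obtain ⟨ε, hε, hev⟩ := h
  exact hε.trans_le (ge_of_tendsto ((continuous_apply_apply i j).tendsto L |>.comp hW) hev)

end EventuallyBddAwayFromZero

lemma MatIrr.rel_of_adj {m : Type*} {A : Matrix m m ℝ} (hA : MatIrr A) {R : m → m → Prop}
    (hrefl : ∀ i, R i i) (htrans : ∀ i l j, R i l → R l j → R i j)
    (hadj : ∀ i j, i ≠ j → A i j ≠ 0 → R i j) (i j : m) : R i j := by
  rcases eq_or_ne i j with rfl | hij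
  · exact hrefl i
  obtain ⟨r, p, rfl, rfl, hp⟩ := hA i j hij
  suffices ∀ k ≤ r, R (p 0) (p k) from this r le_rfl
  intro k hk
  induction k with
  | zero => exact hrefl _
  | succ k ih =>
    refine htrans _ _ _ (ih (by omega)) ?_
    rcases eq_or_ne (p k) (p (k + 1)) with heq | hne
    · exact heq ▸ hrefl _
    · exact hadj _ _ hne (hp k (by omega))

lemma matIrr_of_apply_ne_zero {m : Type*} {A : Matrix m m ℝ}
    (hA : ∀ i j, i ≠ j → A i j ≠ 0) : MatIrr A := fun i j hij =>
  ⟨1, fun k => if k = 0 then i else j, rfl, rfl, fun k hk => by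
    obtain rfl : k = 0 := by omega
    simpa using hA i j hij⟩

/-- Proposition 8 of the paper: `W_min` is irreducible and
`G = τ⁻¹(W_min − I)` has strictly positive off-diagonal entries. -/
theorem stmt9 {n : ℕ} (D : Dat n) (hD : D.Good) (troot : Fin n → ℝ) (τ : ℝ)
    (hτ : D.TauOK troot τ) (W : ℕ → Matrix (Fin n) (Fin n) ℝ) (hW0 : W 0 = 0)
    (hWrec : ∀ k, W (k+1) = D.Btm1 τ (W k) + D.Bt1 τ * (W k * W k))
    (Wmin : Matrix (Fin n) (Fin n) ℝ)
    (hlim : Filter.Tendsto W Filter.atTop (nhds Wmin)) :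
    MatIrr Wmin ∧ ∀ i j, i ≠ j → 0 < (τ⁻¹ • (Wmin - 1)) i j := by
  have hsub : ∀ k, Substoch (W k) := by
    intro k
    induction k with
    | zero => exact hW0 ▸ .zero
    | succ k ih => exact hWrec k ▸ hτ.step_substoch hD ih
  have hev : ∀ i j, EventuallyBddAwayFromZero W i j := by
    refine hD.hQirr.rel_of_adj (fun i => ?_) (fun i l j hil hlj => ?_) (fun i j hij hQ => ?_)
    · obtain ⟨ε, hε, h⟩ := hτ.exists_pos_le_step_apply_self hD i
      exact .of_succ hε fun k => hWrec k ▸ h _ (hsub k)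
    · obtain ⟨c, hc, h⟩ := hτ.exists_pos_mul_le_step_apply hD i j
      exact .trans hc (fun k => (hsub k).1 i l) (fun k => hWrec k ▸ h _ (hsub k) l) hil hlj
    · obtain ⟨ε, hε, h⟩ := hτ.exists_pos_le_step_apply_of_Q_ne_zero hD hij hQ
      exact .of_succ hε fun k => hWrec k ▸ h _ (hsub k)
  have hpos : ∀ i j, 0 < Wmin i j := fun i j => (hev i j).pos_of_tendsto hlim
  refine ⟨matIrr_of_apply_ne_zero fun i j _ => (hpos i j).ne', fun i j hij => ?_⟩
  rw [Matrix.smul_apply, Matrix.sub_apply, Matrix.one_apply_ne hij, sub_zero, smul_eq_mul]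
  exact mul_pos (inv_pos.2 hτ.pos) (hpos i j)
end
end

section
/- Let G be an n×n generator with F(G) = 0. Then Θ 1 = −2(Δ_a 1 + Λ 1) and π^T Θ 1 = −2κ, where Θ = −2Δ_a − Δ_{σ²} G − 2Λ. -/
open MeasureTheory Matrix Filter

noncomputable section

/-- stochastic matrix -/
def StochM {n : ℕ} (W : Matrix (Fin n) (Fin n) ℝ) : Prop :=
  (∀ i j, 0 ≤ W i j) ∧ ∀ i, ∑ j, W i j = 1

/-! Because `G 𝟙 = 0`, the term `Δ_{σ²} G` contributes nothing to `Θ 𝟙`. Moreover `e^{sG}` is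
stochastic for `s ≥ 0`, so `∫₀ˣ e^{Gs} ds` has entries in `[0, x]` and row sums `x`. Hence the
integrands of `Λ 𝟙` are dominated by the first moments and integrate to
`∫ x ν_i(x) dx + ∑_j q_ij ∫ x μ_ij(x) dx`, whose `π`-average is `κ - πᵀ Δ_a 𝟙`. -/

open NormedSpace Finset

section MatrixExp

attribute [local instance] Matrix.linftyOpNormedRing Matrix.linftyOpNormedAlgebra

variable {m : Type*} [Fintype m] [DecidableEq m]

theorem Matrix.hasSum_exp_apply (A : Matrix m m ℝ) (i j : m) :
    HasSum (fun k : ℕ => ((k.factorial : ℝ)⁻¹ • A ^ k) i j) (exp A i j) :=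
  Pi.hasSum.1 (Pi.hasSum.1 (exp_series_hasSum_exp' (𝕂 := ℝ) A) i) j

theorem Matrix.exp_apply_nonneg_of_nonneg {A : Matrix m m ℝ} (hA : ∀ i j, 0 ≤ A i j)
    (i j : m) : 0 ≤ exp A i j := by
  have hpow : ∀ k : ℕ, ∀ i j, 0 ≤ (A ^ k) i j := by
    intro k
    induction k with
    | zero => intro i j; rw [pow_zero, Matrix.one_apply]; split_ifs <;> norm_num
    | succ k ih =>
      intro i j
      rw [pow_succ, Matrix.mul_apply]
      exact sum_nonneg fun l _ => mul_nonneg (ih i l) (hA l j)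
  refine (Matrix.hasSum_exp_apply A i j).nonneg fun k => ?_
  rw [Matrix.smul_apply, smul_eq_mul]
  exact mul_nonneg (by positivity) (hpow k i j)

/-- `A + c • 1` is nonnegative for `c = ∑ₖ |A k k|`, and `exp (-c • 1) = e^{-c} • 1` is
central. -/
theorem Matrix.exp_apply_nonneg_of_offDiag_nonneg {A : Matrix m m ℝ}
    (hA : ∀ i j, i ≠ j → 0 ≤ A i j) (i j : m) : 0 ≤ exp A i j := by
  set c : ℝ := ∑ k, |A k k|
  have hshift : ∀ i j, 0 ≤ (A + c • (1 : Matrix m m ℝ)) i j := by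
    intro i j
    rcases eq_or_ne i j with rfl | hij
    · have : |A i i| ≤ c := single_le_sum (f := fun k => |A k k|) (fun k _ => abs_nonneg _)
        (mem_univ i)
      simp only [Matrix.add_apply, Matrix.smul_apply, Matrix.one_apply_eq, smul_eq_mul, mul_one]
      linarith [neg_abs_le (A i i)]
    · simpa [Matrix.one_apply_ne hij] using hA i j hij
  have hexp : exp A = Real.exp (-c) • exp (A + c • (1 : Matrix m m ℝ)) := by
    have hscalar : exp ((-c) • (1 : Matrix m m ℝ)) = Real.exp (-c) • (1 : Matrix m m ℝ) := by
      rw [← Algebra.algebraMap_eq_smul_one, ← Algebra.algebraMap_eq_smul_one,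
        Real.exp_eq_exp_ℝ, algebraMap_exp_comm]
      rfl
    calc exp A = exp ((-c) • (1 : Matrix m m ℝ) + (A + c • 1)) := by
          rw [neg_smul, add_comm A, neg_add_cancel_left]
      _ = exp ((-c) • (1 : Matrix m m ℝ)) * exp (A + c • 1) :=
        Matrix.exp_add_of_commute _ _ ((Commute.one_left _).smul_left _)
      _ = _ := by rw [hscalar, smul_one_mul]
  rw [hexp, Matrix.smul_apply, smul_eq_mul]
  exact mul_nonneg (Real.exp_nonneg _) (Matrix.exp_apply_nonneg_of_nonneg hshift i j)

theorem Matrix.sum_exp_apply_of_sum_eq_zero {A : Matrix m m ℝ} (hA : ∀ i, ∑ j, A i j = 0)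
    (i : m) : ∑ j, exp A i j = 1 := by
  have hpow : ∀ k : ℕ, ∑ j, (A ^ (k + 1)) i j = 0 := by
    intro k
    simp only [pow_succ, Matrix.mul_apply]
    rw [sum_comm]
    simp [← mul_sum, hA]
  have hsum := hasSum_sum fun j (_ : j ∈ univ) => Matrix.hasSum_exp_apply A i j
  have h0 : ∑ j, (((0 : ℕ).factorial : ℝ)⁻¹ • A ^ 0) i j = 1 := by simp [Matrix.one_apply]
  refine hsum.unique (h0 ▸ hasSum_single 0 fun k hk => ?_)
  obtain ⟨k, rfl⟩ := Nat.exists_eq_succ_of_ne_zero hk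
  simp [Matrix.smul_apply, ← mul_sum, hpow]

theorem Matrix.continuous_exp_smul_apply (A : Matrix m m ℝ) (i j : m) :
    Continuous fun s : ℝ => exp (s • A) i j :=
  (exp_continuous.comp (continuous_id.smul continuous_const)).matrix_elem i j

end MatrixExp

section Generator

variable {n : ℕ} {G : Matrix (Fin n) (Fin n) ℝ}

theorem IsGen.smul (hG : IsGen G) {t : ℝ} (ht : 0 ≤ t) : IsGen (t • G) :=
  ⟨fun i j hij => mul_nonneg ht (hG.1 i j hij), fun i => by
    simp only [Matrix.smul_apply, smul_eq_mul, ← mul_sum, hG.2 i, mul_zero]⟩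

theorem IsGen.abs_mexp_apply_le_one (hG : IsGen G) (i j : Fin n) : |mexp G i j| ≤ 1 := by
  have hnonneg : ∀ j, 0 ≤ mexp G i j := Matrix.exp_apply_nonneg_of_offDiag_nonneg hG.1 i
  rw [abs_of_nonneg (hnonneg j), ← Matrix.sum_exp_apply_of_sum_eq_zero hG.2 i]
  exact single_le_sum (fun k _ => hnonneg k) (mem_univ j)

theorem continuous_cumExp_apply (G : Matrix (Fin n) (Fin n) ℝ) (i j : Fin n) :
    Continuous fun x => cumExp G x i j :=
  intervalIntegral.continuous_primitive
    (fun a b => (Matrix.continuous_exp_smul_apply G i j).intervalIntegrable a b) 0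

theorem sum_cumExp_apply_of_sum_eq_zero (hG : ∀ i, ∑ j, G i j = 0) (x : ℝ) (i : Fin n) :
    ∑ j, cumExp G x i j = x := by
  have hsum : ∀ s : ℝ, ∑ j, exp (s • G) i j = 1 := fun s =>
    Matrix.sum_exp_apply_of_sum_eq_zero (fun k => by
      simp only [Matrix.smul_apply, smul_eq_mul, ← mul_sum, hG k, mul_zero]) i
  simp only [cumExp, mexp, Matrix.of_apply]
  rw [← intervalIntegral.integral_finsetSum fun j _ =>
    (Matrix.continuous_exp_smul_apply G i j).intervalIntegrable _ _]
  simp [hsum]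

theorem IsGen.abs_cumExp_apply_le (hG : IsGen G) {x : ℝ} (hx : 0 ≤ x) (i j : Fin n) :
    |cumExp G x i j| ≤ x := by
  have h := intervalIntegral.norm_integral_le_of_norm_le_const (a := 0) (b := x) (C := 1)
    (f := fun s => mexp (s • G) i j) fun s hs =>
      (hG.smul (le_of_lt (Set.uIoc_of_le hx ▸ hs).1)).abs_mexp_apply_le_one i j
  simpa [cumExp, abs_of_nonneg hx] using h

/-- On `(0, ∞)`, `w x * cumExp G x i j = (cumExp G x i j / x) * (x * w x)` with the first
factor bounded by `1`. -/
theorem IsGen.integrableOn_mul_cumExp_apply (hG : IsGen G) {w : ℝ → ℝ}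
    (hw : IntegrableOn (fun x => x * w x) (Set.Ioi 0)) (i j : Fin n) :
    IntegrableOn (fun x => w x * cumExp G x i j) (Set.Ioi 0) := by
  have hbdd : IntegrableOn (fun x => cumExp G x i j / x * (x * w x)) (Set.Ioi 0) := by
    refine hw.bdd_mul (c := 1) ?_ ?_
    · exact ((continuous_cumExp_apply G i j).continuousOn.div continuousOn_id
        fun x hx => ne_of_gt hx).aestronglyMeasurable measurableSet_Ioi
    · refine (ae_restrict_iff' measurableSet_Ioi).2 (ae_of_all _ fun x (hx : 0 < x) => ?_)
      rw [Real.norm_eq_abs, abs_div, abs_of_pos hx, div_le_one hx]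
      exact hG.abs_cumExp_apply_le (le_of_lt hx) i j
  refine hbdd.congr_fun (fun x (hx : 0 < x) => ?_) measurableSet_Ioi
  field_simp

theorem IsGen.sum_integral_mul_cumExp_apply (hG : IsGen G) {w : ℝ → ℝ}
    (hw : IntegrableOn (fun x => x * w x) (Set.Ioi 0)) (i : Fin n) :
    ∑ j, ∫ x in Set.Ioi 0, w x * cumExp G x i j = ∫ x in Set.Ioi 0, x * w x := by
  rw [← integral_finsetSum _ fun j _ => hG.integrableOn_mul_cumExp_apply hw i j]
  refine setIntegral_congr_fun measurableSet_Ioi fun x _ => ?_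
  rw [← mul_sum, sum_cumExp_apply_of_sum_eq_zero hG.2, mul_comm]

end Generator

namespace Dat

variable {n : ℕ} (D : Dat n) {G : Matrix (Fin n) (Fin n) ℝ}

theorem sum_lam_apply (hM : D.Moments) (hG : IsGen G) (i : Fin n) :
    ∑ j, D.Lam G i j = (∫ x in Set.Ioi 0, x * D.ν i x)
      + ∑ k, D.Q i k * ∫ x in Set.Ioi 0, x * D.μ i k x := by
  have hjumps : ∀ j, intP (fun x => D.Qμ x * cumExp G x) i j
      = ∑ k, D.Q i k * ∫ x in Set.Ioi 0, D.μ i k x * cumExp G x k j := by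
    intro j
    simp only [intP, Qμ, Matrix.of_apply, Matrix.mul_apply, mul_assoc]
    rw [integral_finsetSum _ fun k _ =>
      (hG.integrableOn_mul_cumExp_apply (hM.2 i k) k j).const_mul _]
    simp only [integral_const_mul]
  simp only [Lam, Matrix.add_apply, sum_add_distrib, hjumps]
  rw [sum_comm]
  simp only [← mul_sum, hG.sum_integral_mul_cumExp_apply (hM.2 i _)]
  congr 1
  simp only [intP, Dν, Matrix.of_apply, Matrix.diagonal_mul]
  exact hG.sum_integral_mul_cumExp_apply (hM.1 i) i

theorem sum_theta_apply (hG : ∀ i, ∑ j, G i j = 0) (i : Fin n) :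
    ∑ j, D.Theta G i j = -2 * (D.a i + ∑ j, D.Lam G i j) := by
  simp only [Theta, Da, Ds, Matrix.sub_apply, Matrix.smul_apply, Matrix.diagonal_mul,
    Matrix.diagonal_apply, sum_sub_distrib, smul_eq_mul, ← mul_sum, hG i, mul_ite, mul_zero,
    sum_ite_eq, mem_univ, if_true, sub_zero]
  ring

end Dat

theorem stmt15_general {n : ℕ} (D : Dat n) (hM : D.Moments)
    (π : Fin n → ℝ)
    (G : Matrix (Fin n) (Fin n) ℝ) (hG : IsGen G) :
    (∀ i, ∑ j, D.Theta G i j = -2 * (D.a i + ∑ j, D.Lam G i j)) ∧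
    ∑ i, π i * (∑ j, D.Theta G i j) = -2 * D.kappa π := by
  refine ⟨D.sum_theta_apply hG.2, ?_⟩
  rw [Dat.kappa, mul_sum]
  refine sum_congr rfl fun i _ => ?_
  rw [D.sum_theta_apply hG.2 i, D.sum_lam_apply hM hG i]
  ring

/-- `Θ𝟙 = −2(Δ_a𝟙 + Λ𝟙)` and `πᵀΘ𝟙 = −2κ` for a generator solution
`G` of `F(G)=0`. -/
theorem stmt15 {n : ℕ} (D : Dat n) (hD : D.Good) (hM : D.Moments)
    (π : Fin n → ℝ) (hπ : D.IsStat π)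
    (G : Matrix (Fin n) (Fin n) ℝ) (hG : IsGen G) (hF : D.F G = 0) :
    (∀ i, ∑ j, D.Theta G i j = -2 * (D.a i + ∑ j, D.Lam G i j)) ∧
    ∑ i, π i * (∑ j, D.Theta G i j) = -2 * D.kappa π :=
  stmt15_general D hM π G hG
end
end
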